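/- With Δ_k defined recursively by Δ_0 = 0, Δ_1 = F_{p_1}, Δ_k = (q_{k-1}(u₁-1)(u₂-1)F_{p_k}+1)Δ_{k-1} + (u₁u₂)^{p_{k-1}}(F_{p_k}/F_{p_{k-1}})(Δ_{k-1}-Δ_{k-2}), for n ≥ 2 the diagonal part satisfies Δ_n^[n-2] = P₁ + P₂ + P₃, where, writing q(n) = ∏_{i=1}^{n-1} q_i and F(n) = ∏_{i=1}^{n} F_{p_i}: P₁ = (n-1)(u₁u₂+1)·q(n)·F(n)·(-u₁)^{n-2}, P₂ = Σ_{i=2}^{n} (q(n)/q_{i-1})·(F(n)/F_{p_i})·(-u₁)^{n-2}, and P₃ = Σ_{i=1}^{n-1} (u₁u₂)^{p_i}·(q(n)/q_i)·(F(n)/F_{p_i})·(-u₁)^{n-2}. -/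

import Mathlib

/-!
Grade `ℤ[u₁^±, u₂^±]` by `r - s`, so that `P^[i]` is the component of degree `i`. The factors
`F_r`, `(u₁u₂)^r` and `u₁u₂ + 1` are homogeneous of degree `0`, and `u₁`, `u₂` of degrees `1`
and `-1`. Taking diagonal parts of the recursion therefore expresses `Δ_k^[e]` through
`Δ_{k-1}^[e]`, `Δ_{k-1}^[e ∓ 1]` and `Δ_{k-2}^[e]`, once `F_{p_{k-1}}` is cancelled: the ring
is a domain and `F_r ≠ 0` for `r ≠ 0`, as `F_r` takes the value `r` at `u₁ = u₂ = 1`.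
By induction `Δ_k` lives in degrees `< k`, its top part is `Δ_k^[k-1] = q(k) F(k) (-u₁)^{k-1}`,
and `Δ_k^[k-2]` satisfies a first-order recursion driven by this top part, which splits into
one recursion for each of `P₁`, `P₂`, `P₃`.
-/

open Finset

noncomputable section

/-- Laurent polynomials in two variables `u₁, u₂` over `ℤ`. -/
abbrev L2 := AddMonoidAlgebra ℤ (ℤ × ℤ)

/-- The monomial `u₁^r * u₂^s`. -/
def mono (r s : ℤ) : L2 := AddMonoidAlgebra.single (r, s) 1

/-- The `i`-th diagonal part `P^[i]`: the sum of all monomials `a·u₁^r·u₂^s` of `P`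
with `r - s = i`. -/
def diag (P : L2) (i : ℤ) : L2 :=
  AddMonoidAlgebra.ofCoeff (Finsupp.filter (fun p => p.1 - p.2 = i) P.coeff)

/-- `F r = Σ_{i=0}^{r-1} (u₁u₂)^i` for `r > 0`, `F 0 = 0`,
`F r = -Σ_{i=r}^{-1} (u₁u₂)^i` for `r < 0`. -/
def F (r : ℤ) : L2 :=
  if 0 < r then ∑ i ∈ range r.toNat, mono i i
  else -∑ i ∈ range (-r).toNat, mono (-(i : ℤ) - 1) (-(i : ℤ) - 1)

def diagDeg : ℤ × ℤ →+ ℤ := AddMonoidHom.fst ℤ ℤ - AddMonoidHom.snd ℤ ℤ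

local notation "𝒟" => AddMonoidAlgebra.gradeBy ℤ (diagDeg : ℤ × ℤ → ℤ)

lemma mono_mul_mono (a b c d : ℤ) : mono a b * mono c d = mono (a + c) (b + d) := by
  simp [mono, AddMonoidAlgebra.single_mul_single]

lemma mono_mem (r s : ℤ) : mono r s ∈ 𝒟 (r - s) :=
  AddMonoidAlgebra.single_mem_gradeBy _ _ _

lemma F_mem (r : ℤ) : F r ∈ 𝒟 0 := by
  have h (i : ℤ) : mono i i ∈ 𝒟 0 := by simpa using mono_mem i i
  unfold F
  split
  · exact Submodule.sum_mem _ fun i _ => h i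
  · exact neg_mem (Submodule.sum_mem _ fun i _ => h _)

def evalOne : L2 →ₐ[ℤ] ℤ := AddMonoidAlgebra.lift ℤ ℤ (ℤ × ℤ) 1

lemma evalOne_F (r : ℤ) : evalOne (F r) = r := by
  unfold F
  split <;> simp [evalOne, mono] <;> omega

lemma F_ne_zero {r : ℤ} (hr : r ≠ 0) : F r ≠ 0 :=
  fun h => hr (by simpa [h] using (evalOne_F r).symm)

lemma diag_zero (i : ℤ) : diag 0 i = 0 := by
  simp only [_root_.diag, AddMonoidAlgebra.coeff_zero, Finsupp.filter_zero]
  rfl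

lemma diag_add (P Q : L2) (i : ℤ) : diag (P + Q) i = diag P i + diag Q i := by
  simp only [_root_.diag, AddMonoidAlgebra.coeff_add, Finsupp.filter_add,
    AddMonoidAlgebra.ofCoeff_add]

lemma diag_zsmul (z : ℤ) (P : L2) (i : ℤ) : diag (z • P) i = z • diag P i := by
  simp only [_root_.diag, AddMonoidAlgebra.coeff_smul, Finsupp.filter_smul,
    AddMonoidAlgebra.ofCoeff_smul]

lemma diag_eq_decompose (P : L2) (i : ℤ) : diag P i = DirectSum.decompose 𝒟 P i := by
  induction P using AddMonoidAlgebra.induction_linear with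
  | zero => rw [diag_zero, DirectSum.decompose_zero]; rfl
  | add P Q hP hQ => rw [diag_add, hP, hQ, DirectSum.decompose_add]; rfl
  | single x c =>
    have hx := AddMonoidAlgebra.single_mem_gradeBy (R := ℤ) diagDeg x c
    simp only [_root_.diag, AddMonoidAlgebra.coeff_single]
    by_cases h : x.1 - x.2 = i
    · rw [Finsupp.filter_single_of_pos (fun y : ℤ × ℤ => y.1 - y.2 = i) h,
        DirectSum.decompose_of_mem_same _ (h ▸ hx)]
      rfl
    · rw [Finsupp.filter_single_of_neg (fun y : ℤ × ℤ => y.1 - y.2 = i) h,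
        DirectSum.decompose_of_mem_ne _ hx h]
      rfl

lemma diag_sub (P Q : L2) (i : ℤ) : diag (P - Q) i = diag P i - diag Q i := by
  simp only [diag_eq_decompose, DirectSum.decompose_sub, DirectSum.sub_apply, Submodule.coe_sub]

lemma diag_of_mem {P : L2} {i : ℤ} (hP : P ∈ 𝒟 i) : diag P i = P := by
  rw [diag_eq_decompose, DirectSum.decompose_of_mem_same _ hP]

lemma diag_of_mem_of_ne {P : L2} {i j : ℤ} (hP : P ∈ 𝒟 i) (hij : i ≠ j) : diag P j = 0 := by
  rw [diag_eq_decompose, DirectSum.decompose_of_mem_ne _ hP hij]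

lemma diag_mul_of_mem {Q : L2} {d : ℤ} (hQ : Q ∈ 𝒟 d) (P : L2) (e : ℤ) :
    diag (Q * P) e = Q * diag P (e - d) := by
  rw [diag_eq_decompose, diag_eq_decompose,
    ← DirectSum.coe_decompose_mul_add_of_left_mem _ hQ, add_sub_cancel]

lemma diag_of_recursion {G H M X Y Z : L2} (z : ℤ) (hG : G ∈ 𝒟 0) (hH : H ∈ 𝒟 0)
    (hM : M ∈ 𝒟 0)
    (h : G * X = (z • ((mono 1 0 - 1) * (mono 0 1 - 1)) * H + 1) * (G * Y) + M * H * (Y - Z))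
    (e : ℤ) :
    G * diag X e = z • (G * H * ((mono 1 1 + 1) * diag Y e - mono 1 0 * diag Y (e - 1)
        - mono 0 1 * diag Y (e + 1))) + G * diag Y e + M * H * (diag Y e - diag Z e) := by
  have hGH : G * H ∈ 𝒟 0 := by simpa using SetLike.mul_mem_graded hG hH
  have hMH : M * H ∈ 𝒟 0 := by simpa using SetLike.mul_mem_graded hM hH
  have hW : mono 1 1 + 1 ∈ 𝒟 0 :=
    add_mem (by simpa using mono_mem 1 1) (SetLike.one_mem_graded 𝒟)
  have hu : mono 1 0 ∈ 𝒟 1 := by simpa using mono_mem 1 0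
  have hv : mono 0 1 ∈ 𝒟 (-1) := by simpa using mono_mem 0 1
  have h_expand : G * X = z • (G * H * ((mono 1 1 + 1) * Y - mono 1 0 * Y - mono 0 1 * Y))
      + G * Y + M * H * (Y - Z) := by
    have huv : mono 1 0 * mono 0 1 = mono 1 1 := by simpa using mono_mul_mono 1 0 0 1
    rw [h, ← huv, zsmul_eq_mul, zsmul_eq_mul]
    ring
  simpa only [diag_add, diag_sub, diag_zsmul, diag_mul_of_mem hG, diag_mul_of_mem hGH,
    diag_mul_of_mem hMH, diag_mul_of_mem hW, diag_mul_of_mem hu, diag_mul_of_mem hv, sub_zero,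
    sub_neg_eq_add] using congrArg (diag · e) h_expand

lemma prod_Icc_succ_top_erase {M : Type*} [CommMonoid M] {a b j : ℕ} (hab : a ≤ b + 1)
    (hj : j ≤ b) (f : ℕ → M) :
    ∏ x ∈ (Icc a (b + 1)).erase j, f x = (∏ x ∈ (Icc a b).erase j, f x) * f (b + 1) := by
  rw [← insert_Icc_right_eq_Icc_add_one hab, erase_insert_of_ne (by omega),
    prod_insert (by simp), mul_comm]

lemma Icc_succ_erase_top (a b : ℕ) : (Icc a (b + 1)).erase (b + 1) = Icc a b := by
  rw [Icc_erase_right, Ico_add_one_right_eq_Icc]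

def topPart (p q : ℕ → ℤ) (m : ℕ) : L2 :=
  (∏ i ∈ Icc 1 m, q i) • ((∏ i ∈ Icc 1 m, F (p i)) * (-(mono 1 0)) ^ m)

@[simp] lemma topPart_zero (p q : ℕ → ℤ) : topPart p q 0 = 1 := by
  simp [topPart]

lemma topPart_succ (p q : ℕ → ℤ) (m : ℕ) :
    topPart p q (m + 1) = q (m + 1) • (F (p (m + 1)) * -(mono 1 0) * topPart p q m) := by
  simp only [topPart, prod_Icc_succ_top (Nat.le_add_left 1 m), pow_succ, zsmul_eq_mul]
  push_cast
  ring

def P₁ (p q : ℕ → ℤ) (n : ℕ) : L2 :=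
  (((n : ℤ) - 1) * ∏ i ∈ Icc 1 (n - 1), q i) •
    ((mono 1 1 + 1) * (∏ i ∈ Icc 1 n, F (p i)) * (-(mono 1 0)) ^ (n - 2))

def P₂ (p q : ℕ → ℤ) (n : ℕ) : L2 :=
  ∑ i ∈ Icc 2 n, (∏ j ∈ (Icc 1 (n - 1)).erase (i - 1), q j) •
    ((∏ j ∈ (Icc 1 n).erase i, F (p j)) * (-(mono 1 0)) ^ (n - 2))

def P₃ (p q : ℕ → ℤ) (n : ℕ) : L2 :=
  ∑ i ∈ Icc 1 (n - 1), (∏ j ∈ (Icc 1 (n - 1)).erase i, q j) •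
    (mono (p i) (p i) * (∏ j ∈ (Icc 1 n).erase i, F (p j)) * (-(mono 1 0)) ^ (n - 2))

lemma P₁_add_two (p q : ℕ → ℤ) (m : ℕ) :
    P₁ p q (m + 2) = q (m + 1) • (F (p (m + 2)) *
      ((mono 1 1 + 1) * F (p (m + 1)) * topPart p q m - mono 1 0 * P₁ p q (m + 1))) := by
  rcases m with _ | m <;>
    simp only [P₁, topPart, add_assoc, Nat.reduceAdd, Nat.add_sub_cancel, Nat.reduceSubDiff,
      prod_Icc_succ_top (Nat.le_add_left 1 _), pow_succ, zsmul_eq_mul, zero_add, Icc_self,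
      prod_singleton, Icc_eq_empty_of_lt Nat.zero_lt_one, prod_empty] <;>
    push_cast <;> ring

lemma P₂_add_two (p q : ℕ → ℤ) (m : ℕ) :
    P₂ p q (m + 2) = q (m + 1) • (F (p (m + 2)) * -(mono 1 0) * P₂ p q (m + 1))
      + F (p (m + 1)) * topPart p q m := by
  simp only [P₂, Nat.reduceSubDiff, Nat.add_sub_cancel]
  rw [sum_Icc_succ_top (by omega), mul_sum, smul_sum]
  refine congrArg₂ (· + ·) (sum_congr rfl fun i hi => ?_) ?_
  · rw [mem_Icc] at hi
    rw [prod_Icc_succ_top_erase (by omega) (by omega : i - 1 ≤ m),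
      prod_Icc_succ_top_erase (by omega) (by omega : i ≤ m + 1),
      ← mul_pow_sub_one (by omega : m ≠ 0)]
    simp only [zsmul_eq_mul]
    push_cast
    ring
  · rw [Nat.add_sub_cancel, Icc_succ_erase_top, Icc_succ_erase_top, topPart,
      prod_Icc_succ_top (by omega)]
    simp only [zsmul_eq_mul]
    ring

lemma P₃_add_two (p q : ℕ → ℤ) (m : ℕ) :
    P₃ p q (m + 2) = q (m + 1) • (F (p (m + 2)) * -(mono 1 0) * P₃ p q (m + 1))
      + mono (p (m + 1)) (p (m + 1)) * F (p (m + 2)) * topPart p q m := by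
  simp only [P₃, Nat.reduceSubDiff, Nat.add_sub_cancel]
  rw [sum_Icc_succ_top (by omega), mul_sum, smul_sum]
  refine congrArg₂ (· + ·) (sum_congr rfl fun i hi => ?_) ?_
  · rw [mem_Icc] at hi
    rw [prod_Icc_succ_top_erase (by omega) (by omega : i ≤ m),
      prod_Icc_succ_top_erase (by omega) (by omega : i ≤ m + 1),
      ← mul_pow_sub_one (by omega : m ≠ 0)]
    simp only [zsmul_eq_mul]
    push_cast
    ring
  · rw [Icc_succ_erase_top, prod_Icc_succ_top_erase (by omega) le_rfl, Icc_succ_erase_top,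
      topPart]
    simp only [zsmul_eq_mul]
    ring

structure IsDeltaSeq (n : ℕ) (p q : ℕ → ℤ) (Δ : ℕ → L2) : Prop where
  zero : Δ 0 = 0
  one : Δ 1 = F (p 1)
  recursion : ∀ k, 2 ≤ k → k ≤ n →
    F (p (k - 1)) * Δ k =
      (q (k - 1) • ((mono 1 0 - 1) * (mono 0 1 - 1)) * F (p k) + 1) *
          (F (p (k - 1)) * Δ (k - 1))
        + mono (p (k - 1)) (p (k - 1)) * F (p k) * (Δ (k - 1) - Δ (k - 2))

namespace IsDeltaSeq

variable {n : ℕ} {p q : ℕ → ℤ} {Δ : ℕ → L2}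

lemma diag_add_two (hΔ : IsDeltaSeq n p q Δ) {m : ℕ} (hm : m + 2 ≤ n) (e : ℤ) :
    F (p (m + 1)) * diag (Δ (m + 2)) e =
      q (m + 1) • (F (p (m + 1)) * F (p (m + 2)) * ((mono 1 1 + 1) * diag (Δ (m + 1)) e
        - mono 1 0 * diag (Δ (m + 1)) (e - 1) - mono 0 1 * diag (Δ (m + 1)) (e + 1)))
      + F (p (m + 1)) * diag (Δ (m + 1)) e
      + mono (p (m + 1)) (p (m + 1)) * F (p (m + 2)) * (diag (Δ (m + 1)) e - diag (Δ m) e) :=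
  diag_of_recursion _ (F_mem _) (F_mem _) (by simpa using mono_mem (p (m + 1)) (p (m + 1)))
    (by simpa only [Nat.reduceSubDiff, Nat.add_sub_cancel] using
      hΔ.recursion (m + 2) (by omega) hm) e

lemma diag_eq_zero (hΔ : IsDeltaSeq n p q Δ) (hp : ∀ i, 1 ≤ i → i ≤ n → p i ≠ 0) {k : ℕ}
    (hk : k ≤ n) {e : ℤ} (he : k ≤ e) : diag (Δ k) e = 0 := by
  induction k using Nat.twoStepInduction generalizing e with
  | zero => rw [hΔ.zero, diag_zero]
  | one => rw [hΔ.one]; exact diag_of_mem_of_ne (F_mem _) (by omega)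
  | more m ih₀ ih₁ =>
    refine mul_left_cancel₀ (F_ne_zero (hp (m + 1) (by omega) (by omega))) ?_
    rw [hΔ.diag_add_two hk, ih₀ (by omega) (by omega), ih₁ (by omega) (by omega),
      ih₁ (by omega) (by omega), ih₁ (by omega) (by omega)]
    simp

lemma diag_top (hΔ : IsDeltaSeq n p q Δ) (hp : ∀ i, 1 ≤ i → i ≤ n → p i ≠ 0) {m : ℕ}
    (hm : m + 1 ≤ n) : diag (Δ (m + 1)) m = F (p (m + 1)) * topPart p q m := by
  induction m with
  | zero => simp [hΔ.one, diag_of_mem (F_mem _)]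
  | succ m ih =>
    refine mul_left_cancel₀ (F_ne_zero (hp (m + 1) (by omega) (by omega))) ?_
    rw [hΔ.diag_add_two hm, show ((m + 1 : ℕ) : ℤ) - 1 = m by push_cast; ring, ih (by omega),
      hΔ.diag_eq_zero hp (k := m + 1) (by omega) (by omega),
      hΔ.diag_eq_zero hp (k := m + 1) (by omega) (by omega),
      hΔ.diag_eq_zero hp (k := m) (by omega) (by omega), topPart_succ]
    simp only [zsmul_eq_mul]
    ring

lemma diag_second (hΔ : IsDeltaSeq n p q Δ) (hp : ∀ i, 1 ≤ i → i ≤ n → p i ≠ 0) {m : ℕ}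
    (hm : m + 1 ≤ n) :
    diag (Δ (m + 1)) ((m : ℤ) - 1) = P₁ p q (m + 1) + P₂ p q (m + 1) + P₃ p q (m + 1) := by
  induction m with
  | zero => simp [hΔ.one, diag_of_mem_of_ne (F_mem _), P₁, P₂, P₃]
  | succ m ih =>
    refine mul_left_cancel₀ (F_ne_zero (hp (m + 1) (by omega) (by omega))) ?_
    rw [hΔ.diag_add_two hm, show ((m + 1 : ℕ) : ℤ) - 1 = m by push_cast; ring,
      ih (by omega), hΔ.diag_top hp (by omega),
      hΔ.diag_eq_zero hp (k := m + 1) (by omega) (by omega),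
      hΔ.diag_eq_zero hp (k := m) (by omega) le_rfl, P₁_add_two, P₂_add_two, P₃_add_two]
    simp only [zsmul_eq_mul]
    ring

end IsDeltaSeq

theorem diag_Delta_second_general (n : ℕ) (hn : 2 ≤ n) (p q : ℕ → ℤ)
    (hp : ∀ i, 1 ≤ i → i ≤ n → p i ≠ 0)
    (Δ : ℕ → L2) (h0 : Δ 0 = 0) (h1 : Δ 1 = F (p 1))
    (hrec : ∀ k, 2 ≤ k → k ≤ n →
      F (p (k - 1)) * Δ k =
        (q (k - 1) • ((mono 1 0 - 1) * (mono 0 1 - 1)) * F (p k) + 1) *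
            (F (p (k - 1)) * Δ (k - 1))
          + mono (p (k - 1)) (p (k - 1)) * F (p k) * (Δ (k - 1) - Δ (k - 2))) :
    diag (Δ n) ((n : ℤ) - 2) =
      (((n : ℤ) - 1) * ∏ i ∈ Icc 1 (n - 1), q i) •
          ((mono 1 1 + 1) * (∏ i ∈ Icc 1 n, F (p i)) * (-(mono 1 0)) ^ (n - 2))
        + (∑ i ∈ Icc 2 n, (∏ j ∈ (Icc 1 (n - 1)).erase (i - 1), q j) •
            ((∏ j ∈ (Icc 1 n).erase i, F (p j)) * (-(mono 1 0)) ^ (n - 2)))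
        + (∑ i ∈ Icc 1 (n - 1), (∏ j ∈ (Icc 1 (n - 1)).erase i, q j) •
            (mono (p i) (p i) * (∏ j ∈ (Icc 1 n).erase i, F (p j)) *
              (-(mono 1 0)) ^ (n - 2))) := by
  obtain ⟨m, rfl⟩ : ∃ m, n = m + 1 := ⟨n - 1, by omega⟩
  rw [show ((m + 1 : ℕ) : ℤ) - 2 = m - 1 by push_cast; ring]
  exact IsDeltaSeq.diag_second ⟨h0, h1, hrec⟩ hp le_rfl

/-- With `Δ_k` defined by the recursion (denominators cleared), for `n ≥ 2` the
diagonal part `Δ_n^[n-2]` equals `P₁ + P₂ + P₃` where, writing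
`q(n) = ∏_{i=1}^{n-1} q_i` and `F(n) = ∏_{i=1}^{n} F_{p_i}`:
`P₁ = (n-1)(u₁u₂+1)·q(n)·F(n)·(-u₁)^{n-2}`,
`P₂ = Σ_{i=2}^{n} (q(n)/q_{i-1})·(F(n)/F_{p_i})·(-u₁)^{n-2}`, and
`P₃ = Σ_{i=1}^{n-1} (u₁u₂)^{p_i}·(q(n)/q_i)·(F(n)/F_{p_i})·(-u₁)^{n-2}`
(the quotients are taken as the products with the corresponding factor omitted). -/
theorem diag_Delta_second (n : ℕ) (hn : 2 ≤ n) (p q : ℕ → ℤ)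
    (hp : ∀ i, 1 ≤ i → i ≤ n → p i ≠ 0) (hq : ∀ i, 1 ≤ i → i ≤ n - 1 → q i ≠ 0)
    (Δ : ℕ → L2) (h0 : Δ 0 = 0) (h1 : Δ 1 = F (p 1))
    (hrec : ∀ k, 2 ≤ k → k ≤ n →
      F (p (k - 1)) * Δ k =
        (q (k - 1) • ((mono 1 0 - 1) * (mono 0 1 - 1)) * F (p k) + 1) *
            (F (p (k - 1)) * Δ (k - 1))
          + mono (p (k - 1)) (p (k - 1)) * F (p k) * (Δ (k - 1) - Δ (k - 2))) :
    diag (Δ n) ((n : ℤ) - 2) =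
      (((n : ℤ) - 1) * ∏ i ∈ Icc 1 (n - 1), q i) •
          ((mono 1 1 + 1) * (∏ i ∈ Icc 1 n, F (p i)) * (-(mono 1 0)) ^ (n - 2))
        + (∑ i ∈ Icc 2 n, (∏ j ∈ (Icc 1 (n - 1)).erase (i - 1), q j) •
            ((∏ j ∈ (Icc 1 n).erase i, F (p j)) * (-(mono 1 0)) ^ (n - 2)))
        + (∑ i ∈ Icc 1 (n - 1), (∏ j ∈ (Icc 1 (n - 1)).erase i, q j) •
            (mono (p i) (p i) * (∏ j ∈ (Icc 1 n).erase i, F (p j)) *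
              (-(mono 1 0)) ^ (n - 2))) :=
  diag_Delta_second_general n hn p q hp Δ h0 h1 hrec
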